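/- arXiv:1106.4255 — 5 statements merged into one kernel-verified Lean document; each statement's English description precedes it below -/
import Mathlib

section
/- Let p be a prime, W a finite-dimensional vector space over 𝔽_p, and G ⊆ GL(W) a subgroup containing a nontrivial scalar automorphism λ·id_W with λ ∈ 𝔽_p^×, λ ≠ 1. Then: (1) no simple 𝔽_p[G]-module is a common irreducible factor of W and End(W), and (2) H¹(G,W) = 0. -/
/-- A representation `ρ.asModule` is an `AddCommGroup` whenever `V` is. -/
noncomputable instance Representation.asModuleAddCommGroup {k G V : Type*} [CommRing k]
    [Group G] [AddCommGroup V] [Module k V] (ρ : Representation k G V) :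
    AddCommGroup ρ.asModule :=
  inferInstanceAs <| AddCommGroup V

/-- The conjugation representation of `G` on `End(V)`: `g • φ = ρ g ∘ φ ∘ ρ g⁻¹`. -/
def Representation.conjEnd {k G V : Type*} [CommRing k] [Group G] [AddCommGroup V]
    [Module k V] (ρ : Representation k G V) : Representation k G (V →ₗ[k] V) where
  toFun g :=
    { toFun := fun φ => ρ g ∘ₗ φ ∘ₗ ρ g⁻¹
      map_add' := fun φ ψ => by simp only [LinearMap.add_comp, LinearMap.comp_add]
      map_smul' := fun c φ => by
        simp only [LinearMap.smul_comp, LinearMap.comp_smul, RingHom.id_apply] }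
  map_one' := by ext φ v; simp
  map_mul' g h := by
    ext φ v
    simp [mul_inv_rev, map_mul, Module.End.mul_apply]

/-- Vanishing of the first group cohomology `H¹(G, W)` of a representation `ρ`, expressed via
inhomogeneous `1`-cocycles: every `1`-cocycle is a `1`-coboundary. -/
def H1Trivial {k G W : Type*} [CommRing k] [Group G] [AddCommGroup W] [Module k W]
    (ρ : Representation k G W) : Prop :=
  ∀ f : G → W, (∀ g h : G, f (g * h) = f g + ρ g (f h)) →
    ∃ w : W, ∀ g : G, f g = ρ g w - w

/-- Two `R`-modules have a common irreducible factor if some simple `R`-module is isomorphic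
both to a subquotient (a quotient of a submodule) of the first and to a subquotient of the
second. -/
def HasCommonIrreducibleFactor (R V W : Type*) [Ring R] [AddCommGroup V] [Module R V]
    [AddCommGroup W] [Module R W] : Prop :=
  ∃ (A : Submodule R V) (B : Submodule R A) (A' : Submodule R W) (B' : Submodule R A'),
    IsSimpleModule R (A ⧸ B) ∧ Nonempty ((A ⧸ B) ≃ₗ[R] (A' ⧸ B'))

/-- The tautological representation of a subgroup `G ⊆ GL(W)` on `W`. -/
def tautRep (p : ℕ) (W : Type) [AddCommGroup W] [Module (ZMod p) W]
    (G : Subgroup (W ≃ₗ[ZMod p] W)) : Representation (ZMod p) G W where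
  toFun g := ((g : W ≃ₗ[ZMod p] W) : W →ₗ[ZMod p] W)
  map_one' := by ext w; rfl
  map_mul' g h := by ext w; rfl

/-!
A scalar `λ ≠ 1` in `G` is central, acts on `W` by `λ` and trivially on `End(W)`. In the group
algebra, `g - λ` annihilates `W` and `g - 1` annihilates `End(W)`, so the unit `1 - λ` kills every
common subquotient, which therefore vanishes. For a cocycle `f`, comparing `f (g h)` with
`f (h g)` gives `(λ - 1) f = d (f g)`, so `f` is the coboundary of `(λ - 1)⁻¹ f g`.
-/

theorem Module.annihilator_le_annihilator_subquotient {R M : Type*} [Ring R] [AddCommGroup M]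
    [Module R M] (A : Submodule R M) (B : Submodule R A) :
    Module.annihilator R M ≤ Module.annihilator R (A ⧸ B) :=
  (A.subtype.annihilator_le_of_injective A.injective_subtype).trans
    (B.mkQ.annihilator_le_of_surjective B.mkQ_surjective)

theorem HasCommonIrreducibleFactor.annihilator_sup_ne_top {R V V' : Type*} [Ring R]
    [AddCommGroup V] [Module R V] [AddCommGroup V'] [Module R V']
    (h : HasCommonIrreducibleFactor R V V') :
    Module.annihilator R V ⊔ Module.annihilator R V' ≠ ⊤ := by
  obtain ⟨A, B, A', B', hsimple, ⟨e⟩⟩ := h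
  intro htop
  have : Subsingleton (A ⧸ B) := by
    rw [← Module.annihilator_eq_top_iff (R := R), eq_top_iff, ← htop]
    exact sup_le (Module.annihilator_le_annihilator_subquotient A B)
      ((Module.annihilator_le_annihilator_subquotient A' B').trans_eq e.annihilator_eq.symm)
  exact not_subsingleton_iff_nontrivial.mpr (IsSimpleModule.nontrivial R (A ⧸ B)) this

namespace Representation

variable {k G V : Type*} [CommRing k] [Group G] [AddCommGroup V] [Module k V]
  (ρ : Representation k G V)

theorem mem_annihilator_asModule_iff {r : MonoidAlgebra k G} :
    r ∈ Module.annihilator (MonoidAlgebra k G) ρ.asModule ↔ ρ.asAlgebraHom r = 0 := by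
  rw [Module.mem_annihilator, LinearMap.ext_iff]
  rfl

theorem of_sub_algebraMap_mem_annihilator {g : G} {c : k} (hg : ρ g = c • 1) :
    MonoidAlgebra.of k G g - algebraMap k _ c ∈
      Module.annihilator (MonoidAlgebra k G) ρ.asModule := by
  rw [mem_annihilator_asModule_iff, map_sub, asAlgebraHom_of, AlgHom.commutes, hg,
    Algebra.algebraMap_eq_smul_one, sub_self]

theorem conjEnd_eq_one_of_eq_smul_one {g : G} {c : k} (hg : ρ g = c • 1) : ρ.conjEnd g = 1 := by
  have hcomm (φ : V →ₗ[k] V) (v : V) : ρ g (φ v) = φ (ρ g v) := by simp [hg]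
  ext φ v
  change ρ g (φ (ρ g⁻¹ v)) = φ v
  rw [hcomm, self_inv_apply]

theorem h1Trivial_of_mem_center_of_eq_smul_one {z : G} (hz : z ∈ Subgroup.center G) {c : k}
    (hc : IsUnit (c - 1)) (hρz : ρ z = c • 1) : H1Trivial ρ := by
  intro f hf
  obtain ⟨u, hu⟩ := hc
  have hcob (h : G) : (c - 1) • f h = ρ h (f z) - f z := by
    have hzh := hf z h
    rw [← Subgroup.mem_center_iff.mp hz h, hf h z, hρz, LinearMap.smul_apply,
      Module.End.one_apply] at hzh
    rw [sub_smul, one_smul, sub_eq_sub_iff_add_eq_add, add_comm (c • f h), ← hzh, add_comm]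
  refine ⟨(↑u⁻¹ : k) • f z, fun h => ?_⟩
  rw [map_smul, ← smul_sub, ← hcob, ← hu, smul_smul, Units.inv_mul, one_smul]

end Representation

theorem no_common_factor_and_H1_trivial_of_scalar_general (p : ℕ) [Fact p.Prime]
    (W : Type) [AddCommGroup W] [Module (ZMod p) W]
    (G : Subgroup (W ≃ₗ[ZMod p] W))
    (hscalar : ∃ g ∈ G, ∃ lam : (ZMod p)ˣ, lam ≠ 1 ∧
      ∀ w : W, (g : W ≃ₗ[ZMod p] W) w = (lam : ZMod p) • w) :
    ¬ HasCommonIrreducibleFactor (MonoidAlgebra (ZMod p) G)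
        (tautRep p W G).asModule ((tautRep p W G).conjEnd).asModule ∧
      H1Trivial (tautRep p W G) := by
  obtain ⟨g, hg, lam, hlam, hact⟩ := hscalar
  set ρ := tautRep p W G
  have hρ : ρ ⟨g, hg⟩ = (lam : ZMod p) • 1 := LinearMap.ext hact
  have hcenter : (⟨g, hg⟩ : G) ∈ Subgroup.center G :=
    Subgroup.mem_center_iff.mpr fun h => Subtype.ext <| LinearEquiv.ext fun w => by
      simp [hact]
  have hunit : IsUnit ((lam : ZMod p) - 1) :=
    (sub_ne_zero.mpr (Units.val_eq_one.not.mpr hlam)).isUnit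
  refine ⟨fun h => h.annihilator_sup_ne_top ?_,
    ρ.h1Trivial_of_mem_center_of_eq_smul_one hcenter hunit hρ⟩
  -- `1 - λ = (g - λ) - (g - 1)`
  refine Ideal.eq_top_of_isUnit_mem _ (x := algebraMap (ZMod p) _ (1 - (lam : ZMod p))) ?_
    ((neg_sub (lam : ZMod p) 1 ▸ hunit.neg).map _)
  convert Submodule.sub_mem_sup (ρ.of_sub_algebraMap_mem_annihilator hρ)
    (ρ.conjEnd.of_sub_algebraMap_mem_annihilator (c := 1)
      (by rw [ρ.conjEnd_eq_one_of_eq_smul_one hρ, one_smul])) using 1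
  rw [map_sub, map_one]
  abel

/-- Let `p` be a prime, `W` a finite-dimensional vector space over `𝔽_p`, and
`G ⊆ GL(W)` a subgroup containing a nontrivial scalar automorphism `λ·id_W` with
`λ ∈ 𝔽_p^×, λ ≠ 1`.  Then: (1) no simple `𝔽_p[G]`-module is a common irreducible factor of
`W` and `End(W)` (the latter with the conjugation action), and (2) `H¹(G, W) = 0`. -/
theorem no_common_factor_and_H1_trivial_of_scalar (p : ℕ) [Fact p.Prime]
    (W : Type) [AddCommGroup W] [Module (ZMod p) W] [Module.Finite (ZMod p) W]
    (G : Subgroup (W ≃ₗ[ZMod p] W))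
    (hscalar : ∃ g ∈ G, ∃ lam : (ZMod p)ˣ, lam ≠ 1 ∧
      ∀ w : W, (g : W ≃ₗ[ZMod p] W) w = (lam : ZMod p) • w) :
    ¬ HasCommonIrreducibleFactor (MonoidAlgebra (ZMod p) G)
        (tautRep p W G).asModule ((tautRep p W G).conjEnd).asModule ∧
      H1Trivial (tautRep p W G) :=
  no_common_factor_and_H1_trivial_of_scalar_general p W G hscalar
end

section
/- Let p be a prime and G ⊆ GL₂(𝔽_p) a subgroup such that p does not divide |G| and the image of G in PGL₂(𝔽_p) is isomorphic, as an abstract group, to the alternating group A₄, the symmetric group S₄, or the alternating group A₅. Then G contains a nontrivial scalar matrix, i.e. G meets the center of GL₂(𝔽_p) nontrivially. -/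
/-
A Klein four-subgroup of the image of `G` in `PGL₂` lifts to elements `g`, `h`, `g * h` of `G`
whose images have order 2. If `G` met the center trivially, these would be non-scalar
involutions; by Cayley–Hamilton such an involution has trace `0` and determinant `-1`. Then
`-1 = det (g * h) = det g * det h = 1`, so the characteristic is `2`, while `2 ∣ |G|`.
-/

/-- The image of a subgroup `G ⊆ GL₂(𝔽_p)` in `PGL₂(𝔽_p)`, realized as the quotient of
`GL₂(𝔽_p)` by its center (the subgroup of scalar matrices). -/
noncomputable def pglImage (p : ℕ) [Fact p.Prime] (G : Subgroup (GL (Fin 2) (ZMod p))) :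
    Subgroup (GL (Fin 2) (ZMod p) ⧸ Subgroup.center (GL (Fin 2) (ZMod p))) :=
  G.map (QuotientGroup.mk' (Subgroup.center (GL (Fin 2) (ZMod p))))

open Matrix Subgroup

namespace Matrix

theorem mul_self_fin_two {R : Type*} [CommRing R] [Nontrivial R] (A : Matrix (Fin 2) (Fin 2) R) :
    A * A = A.trace • A - A.det • 1 := by
  have hA := A.aeval_self_charpoly
  simp only [charpoly_fin_two, map_add, map_sub, map_mul, Polynomial.aeval_X,
    Polynomial.aeval_C, Algebra.algebraMap_eq_smul_one, smul_mul_assoc, one_mul, sq] at hA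
  rw [← sub_eq_zero, ← hA]
  abel

theorem det_eq_neg_one_of_mul_self_eq_one {K : Type*} [Field K] {A : Matrix (Fin 2) (Fin 2) K}
    (hA : A * A = 1) (hA_scalar : A ∉ Set.range (scalar (Fin 2))) : A.det = -1 := by
  have htrace : A.trace • A = (1 + A.det) • (1 : Matrix (Fin 2) (Fin 2) K) := by
    have hCH := mul_self_fin_two A
    rw [hA] at hCH
    rw [add_smul, one_smul]
    exact eq_add_of_sub_eq hCH.symm
  have htrace_zero : A.trace = 0 := by
    by_contra h
    refine hA_scalar ⟨A.trace⁻¹ * (1 + A.det), ?_⟩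
    rw [scalar_apply, ← smul_one_eq_diagonal, ← smul_smul, ← htrace, smul_smul,
      inv_mul_cancel₀ h, one_smul]
  rw [htrace_zero, zero_smul] at htrace
  have h00 := congrFun (congrFun htrace 0) 0
  simp only [zero_apply, smul_apply, one_apply_eq, smul_eq_mul, mul_one] at h00
  linear_combination -h00

end Matrix

/-- Equivalently, `H` contains a Klein four-subgroup `{1, a, b, a * b}`. -/
def HasKleinFourPair (H : Type*) [Monoid H] : Prop :=
  ∃ a b : H, orderOf a = 2 ∧ orderOf b = 2 ∧ orderOf (a * b) = 2

theorem HasKleinFourPair.of_mulEquiv {H H' : Type*} [Monoid H] [Monoid H'] (e : H ≃* H')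
    (h : HasKleinFourPair H) : HasKleinFourPair H' := by
  obtain ⟨a, b, ha, hb, hab⟩ := h
  exact ⟨e a, e b, by rwa [e.orderOf_eq], by rwa [e.orderOf_eq], by rwa [← map_mul, e.orderOf_eq]⟩

theorem hasKleinFourPair_perm_fin_four : HasKleinFourPair (Equiv.Perm (Fin 4)) :=
  ⟨Equiv.swap 0 1 * Equiv.swap 2 3, Equiv.swap 0 2 * Equiv.swap 1 3,
    orderOf_eq_prime (by decide) (by decide), orderOf_eq_prime (by decide) (by decide),
    orderOf_eq_prime (by decide) (by decide)⟩

theorem hasKleinFourPair_alternatingGroup_fin_four : HasKleinFourPair (alternatingGroup (Fin 4)) :=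
  ⟨⟨Equiv.swap 0 1 * Equiv.swap 2 3, Equiv.Perm.mem_alternatingGroup.mpr (by decide)⟩,
    ⟨Equiv.swap 0 2 * Equiv.swap 1 3, Equiv.Perm.mem_alternatingGroup.mpr (by decide)⟩,
    orderOf_eq_prime (by decide) (by decide), orderOf_eq_prime (by decide) (by decide),
    orderOf_eq_prime (by decide) (by decide)⟩

theorem hasKleinFourPair_alternatingGroup_fin_five : HasKleinFourPair (alternatingGroup (Fin 5)) :=
  ⟨⟨Equiv.swap 0 1 * Equiv.swap 2 3, Equiv.Perm.mem_alternatingGroup.mpr (by decide)⟩,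
    ⟨Equiv.swap 0 2 * Equiv.swap 1 3, Equiv.Perm.mem_alternatingGroup.mpr (by decide)⟩,
    orderOf_eq_prime (by decide) (by decide), orderOf_eq_prime (by decide) (by decide),
    orderOf_eq_prime (by decide) (by decide)⟩

namespace Matrix.GeneralLinearGroup

variable {K : Type*} [Field K] {G : Subgroup (GL (Fin 2) K)}

theorem exists_val_eq_smul_one_of_mem_center {g : GL (Fin 2) K} (hg : g ∈ center (GL (Fin 2) K)) :
    ∃ c : K, (g : Matrix (Fin 2) (Fin 2) K) = c • 1 := by
  obtain ⟨c, hc⟩ := mem_center_iff_val_mem_range_scalar.mp hg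
  exact ⟨c, by rw [← hc, scalar_apply, smul_one_eq_diagonal]⟩

theorem det_eq_neg_one_of_orderOf_mk_eq_two (hG : Disjoint G (center (GL (Fin 2) K)))
    {g : GL (Fin 2) K} (hg : g ∈ G)
    (hg_order : orderOf (QuotientGroup.mk' (center (GL (Fin 2) K)) g) = 2) :
    (g : Matrix (Fin 2) (Fin 2) K).det = -1 := by
  obtain ⟨hg_sq, hg_ne⟩ := orderOf_eq_prime_iff.mp hg_order
  have hg_sq_mem : g ^ 2 ∈ center (GL (Fin 2) K) := by
    rwa [← map_pow, QuotientGroup.mk'_apply, QuotientGroup.eq_one_iff] at hg_sq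
  have hg_sq_one : g ^ 2 = 1 := disjoint_def.mp hG (pow_mem hg 2) hg_sq_mem
  refine det_eq_neg_one_of_mul_self_eq_one ?_ fun hscalar => hg_ne ?_
  · rw [← Units.val_mul, ← sq, hg_sq_one, Units.val_one]
  · rw [QuotientGroup.mk'_apply, QuotientGroup.eq_one_iff]
    exact mem_center_iff_val_mem_range_scalar.mpr hscalar

theorem not_disjoint_center_of_hasKleinFourPair (hG : (Nat.card G : K) ≠ 0)
    (hV : HasKleinFourPair (G.map (QuotientGroup.mk' (center (GL (Fin 2) K))))) :
    ¬ Disjoint G (center (GL (Fin 2) K)) := by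
  intro hGZ
  obtain ⟨⟨a, ha⟩, ⟨b, hb⟩, ha_order, hb_order, hab_order⟩ := hV
  obtain ⟨g, hg, rfl⟩ := mem_map.mp ha
  obtain ⟨h, hh, rfl⟩ := mem_map.mp hb
  rw [orderOf_mk] at ha_order hb_order
  rw [MulMemClass.mk_mul_mk, orderOf_mk, ← map_mul] at hab_order
  have htwo : (2 : K) = 0 := by
    have := det_eq_neg_one_of_orderOf_mk_eq_two hGZ (mul_mem hg hh) hab_order
    rw [Units.val_mul, det_mul, det_eq_neg_one_of_orderOf_mk_eq_two hGZ hg ha_order,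
      det_eq_neg_one_of_orderOf_mk_eq_two hGZ hh hb_order] at this
    linear_combination this
  have htwo_dvd := (orderOf_map_dvd (QuotientGroup.mk' (center (GL (Fin 2) K))) g).trans
    (G.orderOf_dvd_natCard hg)
  rw [ha_order] at htwo_dvd
  obtain ⟨k, hk⟩ := htwo_dvd
  exact hG (by rw [hk, Nat.cast_mul, Nat.cast_two, htwo, zero_mul])

end Matrix.GeneralLinearGroup

/-- Let `p` be a prime and `G ⊆ GL₂(𝔽_p)` a subgroup such that `p` does not
divide `|G|` and the image of `G` in `PGL₂(𝔽_p)` is isomorphic, as an abstract group, to `A₄`,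
`S₄` or `A₅`.  Then `G` contains a nontrivial scalar matrix, i.e. `G` meets the center of
`GL₂(𝔽_p)` nontrivially. -/
theorem exceptional_subgroup_meets_center (p : ℕ) [Fact p.Prime]
    (G : Subgroup (GL (Fin 2) (ZMod p))) (hcard : ¬ p ∣ Nat.card G)
    (hiso : Nonempty (pglImage p G ≃* alternatingGroup (Fin 4)) ∨
      Nonempty (pglImage p G ≃* Equiv.Perm (Fin 4)) ∨
      Nonempty (pglImage p G ≃* alternatingGroup (Fin 5))) :
    ∃ g ∈ G, g ≠ 1 ∧ ∃ c : ZMod p,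
      ((g : GL (Fin 2) (ZMod p)) : Matrix (Fin 2) (Fin 2) (ZMod p)) =
        c • (1 : Matrix (Fin 2) (Fin 2) (ZMod p)) := by
  have hV : HasKleinFourPair (pglImage p G) := by
    rcases hiso with ⟨⟨e⟩⟩ | ⟨⟨e⟩⟩ | ⟨⟨e⟩⟩
    exacts [hasKleinFourPair_alternatingGroup_fin_four.of_mulEquiv e.symm,
      hasKleinFourPair_perm_fin_four.of_mulEquiv e.symm,
      hasKleinFourPair_alternatingGroup_fin_five.of_mulEquiv e.symm]
  have hG : (Nat.card G : ZMod p) ≠ 0 := by rwa [Ne, ZMod.natCast_eq_zero_iff]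
  have hGZ := GeneralLinearGroup.not_disjoint_center_of_hasKleinFourPair hG hV
  rw [disjoint_def] at hGZ
  push Not at hGZ
  obtain ⟨g, hgG, hgZ, hg_ne⟩ := hGZ
  exact ⟨g, hgG, hg_ne, GeneralLinearGroup.exists_val_eq_smul_one_of_mem_center hgZ⟩
end

section
/- Let p be a prime and ρ : S₃ → GL₂(𝔽_p) an injective group homomorphism. Then for every σ ∈ S₃ the determinant of ρ(σ) equals the image of the sign sign(σ) ∈ {±1} under the natural map {±1} → 𝔽_p^×. -/
/-!
`det ∘ ρ` is a character of `S₃`, so it is determined by its values on the transpositions,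
which generate `S₃`. For a transposition `τ` we have `ρ τ ^ 2 = 1`, so `det (ρ τ) = ±1`.
If it were `1` and `2 ≠ 0`, Cayley–Hamilton would make `ρ τ` a scalar matrix, hence central,
which faithfulness forbids since `τ` is not central in `S₃`. If `2 = 0`, then `1 = -1` anyway.
-/

open Equiv Matrix

theorem Matrix.trace_smul_eq_two_of_mul_self_eq_one {R : Type*} [CommRing R]
    {A : Matrix (Fin 2) (Fin 2) R} (hA : A * A = 1) (hdet : A.det = 1) : A.trace • A = 2 := by
  rw [det_fin_two] at hdet
  ext i j
  have hij := congrFun (congrFun hA i) j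
  fin_cases i <;> fin_cases j <;>
    simp [mul_apply, Fin.sum_univ_two, trace_fin_two, ofNat_apply] at hij ⊢
  · linear_combination hij + hdet
  · linear_combination hij
  · linear_combination hij
  · linear_combination hij + hdet

theorem Matrix.commute_of_mul_self_eq_one_of_det_eq_one {K : Type*} [Field K] (h2 : (2 : K) ≠ 0)
    {A : Matrix (Fin 2) (Fin 2) K} (hA : A * A = 1) (hdet : A.det = 1)
    (B : Matrix (Fin 2) (Fin 2) K) : Commute A B := by
  have hsmul := trace_smul_eq_two_of_mul_self_eq_one hA hdet
  have htr : A.trace ≠ 0 := by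
    intro h
    rw [h, zero_smul] at hsmul
    exact h2 (by simpa [ofNat_apply] using (congrFun (congrFun hsmul 0) 0).symm)
  have hscalar : A = A.trace⁻¹ • (2 : Matrix (Fin 2) (Fin 2) K) := by
    rw [← hsmul, smul_smul, inv_mul_cancel₀ htr, one_smul]
  rw [hscalar]
  exact (Commute.ofNat_left 2 B).smul_left _

theorem Matrix.GeneralLinearGroup.det_eq_neg_one_of_mul_self_eq_one {K : Type*} [Field K]
    {A : GL (Fin 2) K} (hA : A * A = 1) (hB : ∃ B, ¬Commute A B) : det A = -1 := by
  have hA' : A.val * A.val = 1 := by rw [← Units.val_mul, hA, Units.val_one]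
  have hsq : A.val.det * A.val.det = 1 := by rw [← Matrix.det_mul, hA', det_one]
  rw [Units.ext_iff, val_det_apply, Units.val_neg, Units.val_one]
  rcases mul_self_eq_one_iff.1 hsq with h1 | h1
  · by_cases h2 : (2 : K) = 0
    · linear_combination h1 + h2
    · obtain ⟨B, hAB⟩ := hB
      exact absurd (Units.ext (commute_of_mul_self_eq_one_of_det_eq_one h2 hA' h1 B).eq) hAB
  · exact h1

theorem Equiv.Perm.IsSwap.exists_not_commute {α : Type*} [DecidableEq α] {τ : Perm α}
    (hτ : τ.IsSwap) (hα : 3 ≤ ENat.card α) : ∃ σ, ¬Commute τ σ := by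
  obtain ⟨x, y, hxy, rfl⟩ := hτ
  obtain ⟨z, hzx, hzy⟩ := ENat.exists_ne_ne_of_three_le hα x y
  refine ⟨swap y z, fun h => hzy ?_⟩
  simpa [swap_apply_of_ne_of_ne hxy hzx.symm] using (congrArg (· x) h.eq).symm

/-- Let `p` be a prime and `ρ : S₃ → GL₂(𝔽_p)` an injective group
homomorphism.  Then for every `σ ∈ S₃` the determinant of `ρ σ` equals the image of the sign
`sign σ ∈ {±1}` under the natural map `{±1} → 𝔽_p^×`. -/
theorem det_of_faithful_S3_rep_eq_sign (p : ℕ) [Fact p.Prime]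
    (ρ : Equiv.Perm (Fin 3) →* GL (Fin 2) (ZMod p)) (hρ : Function.Injective ρ) :
    ∀ σ : Equiv.Perm (Fin 3),
      ((ρ σ : GL (Fin 2) (ZMod p)) : Matrix (Fin 2) (Fin 2) (ZMod p)).det =
        ((Equiv.Perm.sign σ : ℤ) : ZMod p) := by
  have hswap : Set.EqOn (GeneralLinearGroup.det.comp ρ)
      ((Units.map (Int.castRingHom (ZMod p))).comp Perm.sign) {τ | τ.IsSwap} := by
    intro τ hτ
    obtain ⟨σ, hτσ⟩ := hτ.exists_not_commute (by simp)
    have hρτσ : ¬Commute (ρ τ) (ρ σ) := fun h => hτσ (hρ (by rw [map_mul, map_mul, h.eq]))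
    have hρτ : ρ τ * ρ τ = 1 := by
      obtain ⟨x, y, -, rfl⟩ := hτ
      rw [← map_mul, Equiv.swap_mul_self, map_one]
    rw [MonoidHom.comp_apply, MonoidHom.comp_apply, hτ.sign_eq,
      GeneralLinearGroup.det_eq_neg_one_of_mul_self_eq_one hρτ ⟨_, hρτσ⟩]
    ext
    simp
  intro σ
  simpa using congr(($(MonoidHom.eq_of_eqOn_dense Perm.closure_isSwap hswap) σ : ZMod p))
end

section
/- Let p be a prime and M ∈ GL₂(ℚ_p) a matrix with M^p = 1 and M ≠ 1. Then p ≤ 3. -/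
/-!
If `A ≠ 1` and `A ^ p = 1`, the minimal polynomial of `A` divides `X ^ p - 1 = Φ_p * (X - 1)`
without dividing `X - 1`, so it shares a factor with the cyclotomic polynomial `Φ_p`. Over `ℚ_p`
this polynomial is irreducible: `Φ_p(X + 1)` is Eisenstein at the prime `p` of `ℤ_p`, and Gauss's
lemma passes from `ℤ_p` to `ℚ_p`. Hence `Φ_p` divides the characteristic polynomial of `A`, and
`p - 1 ≤ 2`.
-/

open Polynomial

namespace Polynomial

variable {R : Type*} [CommRing R] [IsDomain R] (p : ℕ) [Fact p.Prime]

theorem cyclotomic_comp_X_add_one_isEisensteinAt_of_prime_natCast (hpR : Prime (p : R)) :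
    ((cyclotomic p R).comp (X + 1)).IsEisensteinAt (Ideal.span {(p : R)}) := by
  have hweak : ((cyclotomic p R).comp (X + 1)).IsWeaklyEisensteinAt (Ideal.span {(p : R)}) := by
    simpa [map_comp, Ideal.map_span] using
      (cyclotomic_comp_X_add_one_isEisensteinAt p).isWeaklyEisensteinAt.map (Int.castRingHom R)
  refine Monic.isEisensteinAt_of_mem_of_notMem ((cyclotomic.monic p R).comp_X_add_C 1)
    ((Ideal.span_singleton_prime hpR.ne_zero).mpr hpR).ne_top hweak.mem ?_
  rw [coeff_zero_eq_eval_zero, eval_comp, eval_add, eval_X, eval_one, zero_add,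
    eval_one_cyclotomic_prime, Ideal.span_singleton_pow, Ideal.mem_span_singleton]
  rintro ⟨c, hc⟩
  have hpc : (p : R) * 1 = p * (p * c) := by rw [mul_one, ← mul_assoc, ← sq]; exact hc
  exact hpR.not_isUnit (IsUnit.of_mul_eq_one c (mul_left_cancel₀ hpR.ne_zero hpc).symm)

theorem cyclotomic_prime_irreducible_of_prime_natCast (hpR : Prime (p : R)) :
    Irreducible (cyclotomic p R) := by
  have hdeg : 0 < ((cyclotomic p R).comp (X + C 1)).natDegree := by
    rw [natDegree_comp, natDegree_X_add_C, mul_one, natDegree_cyclotomic,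
      Nat.totient_prime Fact.out]
    exact Nat.sub_pos_of_lt (Fact.out : p.Prime).one_lt
  have hirr : Irreducible ((cyclotomic p R).comp (X + C 1)) := by
    simpa using (cyclotomic_comp_X_add_one_isEisensteinAt_of_prime_natCast p hpR).irreducible
      ((Ideal.span_singleton_prime hpR.ne_zero).mpr hpR)
      ((cyclotomic.monic p R).comp_X_add_C 1).isPrimitive (by simpa using hdeg)
  rw [comp_eq_aeval, ← algEquivAevalXAddC_apply] at hirr
  exact (MulEquiv.irreducible_iff _).mp hirr

theorem cyclotomic_prime_irreducible_padic : Irreducible (cyclotomic p ℚ_[p]) := by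
  simpa using (cyclotomic.monic p ℤ_[p]).irreducible_iff_irreducible_map_fraction_map
    (K := ℚ_[p]) |>.mp (cyclotomic_prime_irreducible_of_prime_natCast p PadicInt.prime_p)

end Polynomial

theorem cyclotomic_dvd_minpoly_of_pow_eq_one {K A : Type*} [Field K] [Ring A] [Algebra K A]
    {p : ℕ} [Fact p.Prime] (hirr : Irreducible (cyclotomic p K)) {a : A} (hap : a ^ p = 1)
    (ha : a ≠ 1) : cyclotomic p K ∣ minpoly K a := by
  refine (dvd_or_isCoprime _ _ hirr).resolve_right fun hcop => ha ?_
  have hdvd : minpoly K a ∣ cyclotomic p K * (X - 1) := by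
    rw [cyclotomic_prime_mul_X_sub_one, minpoly.dvd_iff]
    simp [hap]
  simpa [sub_eq_zero] using minpoly.dvd_iff.mp (hcop.symm.dvd_of_dvd_mul_left hdvd)

theorem Matrix.sub_one_le_card_of_pow_prime_eq_one {n K : Type*} [Fintype n] [DecidableEq n]
    [Field K] {p : ℕ} [Fact p.Prime] (hirr : Irreducible (cyclotomic p K))
    {A : Matrix n n K} (hAp : A ^ p = 1) (hA : A ≠ 1) : p - 1 ≤ Fintype.card n :=
  calc p - 1 = (cyclotomic p K).natDegree := by
          rw [natDegree_cyclotomic, Nat.totient_prime Fact.out]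
    _ ≤ A.charpoly.natDegree := natDegree_le_of_dvd
          ((cyclotomic_dvd_minpoly_of_pow_eq_one hirr hAp hA).trans A.minpoly_dvd_charpoly)
          A.charpoly_monic.ne_zero
    _ = Fintype.card n := A.charpoly_natDegree_eq_dim

/-- Let `p` be a prime and `M ∈ GL₂(ℚ_p)` a matrix with `M ^ p = 1` and
`M ≠ 1`. Then `p ≤ 3`. -/
theorem order_p_element_GL2_Qp_implies_p_le_three (p : ℕ) [Fact p.Prime]
    (M : GL (Fin 2) ℚ_[p]) (hMp : M ^ p = 1) (hM : M ≠ 1) :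
    p ≤ 3 := by
  have h := Matrix.sub_one_le_card_of_pow_prime_eq_one (cyclotomic_prime_irreducible_padic p)
    (A := (M : Matrix (Fin 2) (Fin 2) ℚ_[p]))
    (by rw [← Units.val_pow_eq_pow_val, hMp, Units.val_one]) (mt Units.val_eq_one.mp hM)
  rw [Fintype.card_fin] at h
  omega
end

section
/- Let p be a prime, let U ⊆ GL₂(𝔽_p) be the subgroup of upper unitriangular matrices { [[1,b],[0,1]] : b ∈ 𝔽_p }, let V = 𝔽_p² with the natural U-action, and let L = V^U be the subspace of U-fixed vectors (the line spanned by the first standard basis vector). Then: (a) the connecting homomorphism δ : H⁰(U, V/L) → H¹(U, L) in the long exact cohomology sequence of 0 → L → V → V/L → 0 is an isomorphism, and (b) the induced map H¹(U, V) → H¹(U, V/L) is injective. -/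
/-
The action of `u = [[1,b],[0,1]]` is `(x, y) ↦ (x + b y, y)`, so `U` acts trivially on `L` and on
`V/L`, and `u v - v = (b y, 0)`. An `L`-valued cocycle `f` is therefore additive in `b`, hence
`f u = b • (c, 0)` with `(c, 0)` its value at `b = 1`, which is exactly the coboundary of the vector
`(0, c)`. This gives the surjectivity of `δ`; injectivity of `δ` holds because `L` is fixed, so its
coboundaries vanish. For (b), if `f - d v` is `L`-valued, where `d v = (u ↦ u v - v)`, it is
an `L`-valued cocycle, hence equal to `d w` for some `w ∈ V`, and `f = d (v + w)`.
-/

/-- The subgroup `U = { [[1,b],[0,1]] : b ∈ 𝔽_p } ⊆ GL₂(𝔽_p)` of upper unitriangular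
matrices. -/
def uniSub (p : ℕ) [Fact p.Prime] : Subgroup (GL (Fin 2) (ZMod p)) where
  carrier := {u | ((u : Matrix (Fin 2) (Fin 2) (ZMod p)) 0 0 = 1 ∧
    (u : Matrix (Fin 2) (Fin 2) (ZMod p)) 1 1 = 1 ∧
    (u : Matrix (Fin 2) (Fin 2) (ZMod p)) 1 0 = 0)}
  one_mem' := by
    refine ⟨?_, ?_, ?_⟩ <;> simp [Matrix.one_apply]
  mul_mem' := by
    rintro a b ⟨ha00, ha11, ha10⟩ ⟨hb00, hb11, hb10⟩
    refine ⟨?_, ?_, ?_⟩ <;>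
      simp [Units.val_mul, Matrix.mul_apply, Fin.sum_univ_two, ha00, ha11, ha10,
        hb00, hb11, hb10]
  inv_mem' := by
    rintro a ⟨ha00, ha11, ha10⟩
    have hmi : ((a : Matrix (Fin 2) (Fin 2) (ZMod p)) *
        ((a⁻¹ : GL (Fin 2) (ZMod p)) : Matrix (Fin 2) (Fin 2) (ZMod p))) = 1 := a.mul_inv
    have him : (((a⁻¹ : GL (Fin 2) (ZMod p)) : Matrix (Fin 2) (Fin 2) (ZMod p)) *
        (a : Matrix (Fin 2) (Fin 2) (ZMod p))) = 1 := a.inv_mul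
    refine ⟨?_, ?_, ?_⟩
    · have h := congrFun (congrFun him 0) 0
      simpa [Matrix.mul_apply, Fin.sum_univ_two, ha00, ha10, Matrix.one_apply] using h
    · have h := congrFun (congrFun hmi 1) 1
      simpa [Matrix.mul_apply, Fin.sum_univ_two, ha11, ha10, Matrix.one_apply] using h
    · have h := congrFun (congrFun hmi 1) 0
      simpa [Matrix.mul_apply, Fin.sum_univ_two, ha11, ha10, Matrix.one_apply] using h

/-- The natural action of an element `u` of `U` on `V = 𝔽_p²`. -/
def uAct (p : ℕ) [Fact p.Prime] (u : uniSub p) (v : Fin 2 → ZMod p) : Fin 2 → ZMod p :=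
  Matrix.mulVec (((u : GL (Fin 2) (ZMod p)) : Matrix (Fin 2) (Fin 2) (ZMod p))) v

/-- The subspace `L = V^U` of `U`-fixed vectors of `V = 𝔽_p²` (the line spanned by the first
standard basis vector). -/
def fixedL (p : ℕ) [Fact p.Prime] : Submodule (ZMod p) (Fin 2 → ZMod p) where
  carrier := {v | ∀ u : uniSub p, uAct p u v = v}
  add_mem' := by
    intro a b ha hb u
    simp only [uAct] at *
    rw [Matrix.mulVec_add, ha u, hb u]
  zero_mem' := by
    intro u
    simp [uAct, Matrix.mulVec_zero]
  smul_mem' := by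
    intro c a ha u
    simp only [uAct] at *
    rw [Matrix.mulVec_smul, ha u]

namespace uniSub

variable {p : ℕ} [Fact p.Prime]

def offDiag (u : uniSub p) : ZMod p :=
  ((u : GL (Fin 2) (ZMod p)) : Matrix (Fin 2) (Fin 2) (ZMod p)) 0 1

def unipotent (b : ZMod p) : uniSub p :=
  ⟨⟨!![1, b; 0, 1], !![1, -b; 0, 1], by simp [Matrix.one_fin_two],
      by simp [Matrix.one_fin_two]⟩, by simp [uniSub]⟩

lemma unipotent_add (b c : ZMod p) : unipotent (b + c) = unipotent b * unipotent c := by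
  ext i j
  fin_cases i <;> fin_cases j <;> simp [unipotent, add_comm]

lemma unipotent_offDiag (u : uniSub p) : unipotent (offDiag u) = u := by
  obtain ⟨h00, h11, h10⟩ := u.2
  ext i j
  fin_cases i <;> fin_cases j <;> simp [unipotent, offDiag, h00, h11, h10]

lemma uAct_apply (u : uniSub p) (v : Fin 2 → ZMod p) :
    uAct p u v = ![v 0 + offDiag u * v 1, v 1] := by
  obtain ⟨h00, h11, h10⟩ := u.2
  ext i
  fin_cases i <;> simp [uAct, offDiag, Matrix.mulVec, dotProduct, Fin.sum_univ_two, h00, h11, h10]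

lemma uAct_mul (u u' : uniSub p) (v : Fin 2 → ZMod p) :
    uAct p (u * u') v = uAct p u (uAct p u' v) := by
  simp only [uAct, Subgroup.coe_mul, Units.val_mul, Matrix.mulVec_mulVec]

lemma uAct_add (u : uniSub p) (v w : Fin 2 → ZMod p) :
    uAct p u (v + w) = uAct p u v + uAct p u w :=
  Matrix.mulVec_add _ v w

lemma uAct_sub (u : uniSub p) (v w : Fin 2 → ZMod p) :
    uAct p u (v - w) = uAct p u v - uAct p u w :=
  Matrix.mulVec_sub _ v w

lemma mem_fixedL_iff (v : Fin 2 → ZMod p) : v ∈ fixedL p ↔ v 1 = 0 := by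
  refine ⟨fun h => ?_, fun h u => ?_⟩
  · simpa [uAct_apply, offDiag, unipotent] using congrFun (h (unipotent 1)) 0
  · ext i
    fin_cases i <;> simp [uAct_apply, h]

lemma uAct_sub_self_mem_fixedL (u : uniSub p) (v : Fin 2 → ZMod p) :
    uAct p u v - v ∈ fixedL p := by
  rw [mem_fixedL_iff, uAct_apply]
  simp

def IsCocycle (f : uniSub p → Fin 2 → ZMod p) : Prop :=
  ∀ u u' : uniSub p, f (u * u') = f u + uAct p u (f u')

def coboundary (v : Fin 2 → ZMod p) (u : uniSub p) : Fin 2 → ZMod p :=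
  uAct p u v - v

lemma IsCocycle.sub_coboundary {f : uniSub p → Fin 2 → ZMod p} (hf : IsCocycle f)
    (v : Fin 2 → ZMod p) : IsCocycle (f - coboundary v) := by
  intro u u'
  simp only [Pi.sub_apply, coboundary, hf u u', uAct_mul, uAct_sub]
  abel

lemma IsCocycle.map_unipotent_of_mem_fixedL {f : uniSub p → Fin 2 → ZMod p} (hf : IsCocycle f)
    (hL : ∀ u, f u ∈ fixedL p) (b : ZMod p) :
    f (unipotent b) = b • f (unipotent 1) := by
  let φ : ZMod p →+ (Fin 2 → ZMod p) := AddMonoidHom.mk' (fun b => f (unipotent b)) fun b c => by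
    rw [unipotent_add, hf, hL _ (unipotent b)]
  simpa [φ] using ZMod.map_smul φ b 1

lemma IsCocycle.exists_eq_coboundary_of_mem_fixedL {f : uniSub p → Fin 2 → ZMod p}
    (hf : IsCocycle f) (hL : ∀ u, f u ∈ fixedL p) : ∃ w, f = coboundary w := by
  have h1 : f (unipotent 1) 1 = 0 := (mem_fixedL_iff _).mp (hL _)
  refine ⟨![0, f (unipotent 1) 0], funext fun u => ?_⟩
  have hu : f u = offDiag u • f (unipotent 1) := by
    simpa only [unipotent_offDiag] using hf.map_unipotent_of_mem_fixedL hL (offDiag u)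
  ext i
  fin_cases i <;> simp [hu, coboundary, uAct_apply, h1, mul_comm]

lemma coboundary_add (v w : Fin 2 → ZMod p) :
    coboundary (v + w) = coboundary v + coboundary w := by
  ext1 u
  simp only [coboundary, Pi.add_apply, uAct_add]
  abel

end uniSub

open uniSub

/-- Let `p` be a prime, `U ⊆ GL₂(𝔽_p)` the subgroup of upper unitriangular
matrices, `V = 𝔽_p²` with the natural `U`-action, and `L = V^U` the subspace of `U`-fixed
vectors.  Then, in the long exact cohomology sequence of `0 → L → V → V/L → 0`:
(a) the connecting homomorphism `δ : H⁰(U, V/L) → H¹(U, L)` is an isomorphism (it has trivial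
kernel and is surjective), and
(b) the induced map `H¹(U, V) → H¹(U, V/L)` is injective.
All cohomology classes are spelled out via inhomogeneous cocycles and coboundaries; classes of
`H⁰(U, V/L)` and `H¹(U, V/L)` are represented by elements, resp. maps, of `V` taken modulo
`L`. -/
theorem delta_H0_to_H1_iso_and_H1_injective (p : ℕ) [Fact p.Prime] :
    -- (a) `δ` has trivial kernel:
    ((∀ v : Fin 2 → ZMod p,
        (∀ u : uniSub p, uAct p u v - v ∈ fixedL p) →
        (∃ w ∈ fixedL p, ∀ u : uniSub p, uAct p u v - v = uAct p u w - w) →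
        v ∈ fixedL p) ∧
      -- (a) `δ` is surjective: every `1`-cocycle of `U` with values in `L` is, up to a
      -- coboundary with values in `L`, of the form `δ` of a `U`-invariant class in `V/L`:
      (∀ f : uniSub p → (Fin 2 → ZMod p),
        (∀ u : uniSub p, f u ∈ fixedL p) →
        (∀ u u' : uniSub p, f (u * u') = f u + uAct p u (f u')) →
        ∃ v : Fin 2 → ZMod p, (∀ u : uniSub p, uAct p u v - v ∈ fixedL p) ∧
          ∃ w ∈ fixedL p, ∀ u : uniSub p,
            f u = (uAct p u v - v) + (uAct p u w - w))) ∧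
    -- (b) `H¹(U, V) → H¹(U, V/L)` is injective:
    (∀ f : uniSub p → (Fin 2 → ZMod p),
      (∀ u u' : uniSub p, f (u * u') = f u + uAct p u (f u')) →
      (∃ v : Fin 2 → ZMod p, ∀ u : uniSub p, f u - (uAct p u v - v) ∈ fixedL p) →
      ∃ w : Fin 2 → ZMod p, ∀ u : uniSub p, f u = uAct p u w - w) := by
  refine ⟨⟨?_, ?_⟩, ?_⟩
  · rintro v - ⟨w, hw, hvw⟩ u
    simpa [hw u, sub_eq_zero] using hvw u
  · intro f hL hf
    obtain ⟨v, rfl⟩ := IsCocycle.exists_eq_coboundary_of_mem_fixedL hf hL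
    refine ⟨v, (uAct_sub_self_mem_fixedL · v), 0, zero_mem _, fun u => ?_⟩
    simp [coboundary, uAct_apply]
  · rintro f hf ⟨v, hv⟩
    obtain ⟨w, hw⟩ := (IsCocycle.sub_coboundary hf v).exists_eq_coboundary_of_mem_fixedL hv
    refine ⟨v + w, fun u => ?_⟩
    show f u = coboundary (v + w) u
    rw [coboundary_add, ← hw]
    simp
end
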